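/- Assume x̄ ≠ 0 and ε̃ ≥ 0, and set β = √(1 + ε̃/(3‖x̄‖²)). Then for every x ∈ ℝⁿ, ∇g(x) = 0 if and only if x = 0, or x = β·x̄, or x = −β·x̄, or (⟨x̄,x⟩ = 0 and ‖x‖² = (‖x̄‖² + ε̃)/3). -/

import Mathlib

open scoped RealInnerProductSpace BigOperators

/-- The expectation `g` of the noisy phase-retrieval objective (up to an additive constant). -/
noncomputable def gObj (n : ℕ) (xbar : EuclideanSpace ℝ (Fin n)) (εt : ℝ)
    (x : EuclideanSpace ℝ (Fin n)) : ℝ :=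
  (3 / 4) * (‖x‖ ^ 4 + ‖xbar‖ ^ 4) - (1 / 2) * ‖xbar‖ ^ 2 * ‖x‖ ^ 2 - ⟪xbar, x⟫ ^ 2
    - (εt / 2) * (‖x‖ ^ 2 - ‖xbar‖ ^ 2)

/-- The gradient of `g`. -/
noncomputable def gGrad (n : ℕ) (xbar : EuclideanSpace ℝ (Fin n)) (εt : ℝ)
    (x : EuclideanSpace ℝ (Fin n)) : EuclideanSpace ℝ (Fin n) :=
  (3 * ‖x‖ ^ 2) • x - (2 * ⟪xbar, x⟫) • xbar - (‖xbar‖ ^ 2 + εt) • x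

/- The gradient is `(3‖x‖² - ‖x̄‖² - ε̃) x - 2⟨x̄,x⟩ x̄`. If `⟨x̄,x⟩ = 0` it vanishes iff `x = 0`
or the scalar coefficient vanishes. Otherwise `x` is parallel to `x̄`, say `x = t x̄` with `t ≠ 0`,
and the gradient becomes `t (3t²‖x̄‖² - 3‖x̄‖² - ε̃) x̄`, which vanishes iff
`t² = 1 + ε̃/(3‖x̄‖²) = β²`. -/

theorem exists_eq_smul_of_smul_eq_smul {K E : Type*} [DivisionRing K] [AddCommGroup E]
    [Module K E] {a x : E} {c d : K} (h : c • x = d • a) (hda : d • a ≠ 0) :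
    ∃ t : K, x = t • a := by
  have hc : c ≠ 0 := by
    rintro rfl
    exact hda (by rw [← h, zero_smul])
  exact ⟨c⁻¹ * d, by rw [mul_smul, ← h, inv_smul_smul₀ hc]⟩

theorem three_mul_sq_mul_sq_eq_iff {r ε t : ℝ} (hr : r ≠ 0) (hε : 0 ≤ ε) :
    3 * t ^ 2 * r ^ 2 = 3 * r ^ 2 + ε ↔
      t = √(1 + ε / (3 * r ^ 2)) ∨ t = -√(1 + ε / (3 * r ^ 2)) := by
  have hsq : 3 * t ^ 2 * r ^ 2 = 3 * r ^ 2 + ε ↔ t ^ 2 = 1 + ε / (3 * r ^ 2) := by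
    constructor <;> intro h <;> field_simp at h ⊢ <;> linarith
  rw [hsq, ← sq_eq_sq_iff_eq_or_eq_neg, Real.sq_sqrt (by positivity)]

section

variable {n : ℕ} {xbar : EuclideanSpace ℝ (Fin n)} {εt : ℝ}

theorem gGrad_eq_zero_iff {x : EuclideanSpace ℝ (Fin n)} :
    gGrad n xbar εt x = 0 ↔ (3 * ‖x‖ ^ 2 - (‖xbar‖ ^ 2 + εt)) • x = (2 * ⟪xbar, x⟫) • xbar := by
  rw [gGrad, sub_smul, sub_right_comm, sub_eq_zero]

theorem gGrad_of_inner_eq_zero {x : EuclideanSpace ℝ (Fin n)} (hx : ⟪xbar, x⟫ = 0) :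
    gGrad n xbar εt x = (3 * ‖x‖ ^ 2 - (‖xbar‖ ^ 2 + εt)) • x := by
  rw [gGrad, hx, mul_zero, zero_smul, sub_zero, sub_smul]

theorem gGrad_smul_self (t : ℝ) :
    gGrad n xbar εt (t • xbar) = (t * (3 * t ^ 2 * ‖xbar‖ ^ 2 - (3 * ‖xbar‖ ^ 2 + εt))) • xbar := by
  simp only [gGrad, norm_smul, real_inner_smul_right, real_inner_self_eq_norm_sq, mul_pow,
    Real.norm_eq_abs, sq_abs]
  match_scalars
  ring

theorem gGrad_smul_self_eq_zero_iff (hxbar : xbar ≠ 0) (t : ℝ) :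
    gGrad n xbar εt (t • xbar) = 0 ↔ t = 0 ∨ 3 * t ^ 2 * ‖xbar‖ ^ 2 = 3 * ‖xbar‖ ^ 2 + εt := by
  rw [gGrad_smul_self, smul_eq_zero, or_iff_left hxbar, mul_eq_zero, sub_eq_zero]

end

/-- characterization of the critical points of `g`. -/
theorem stmt7 (n : ℕ) (xbar : EuclideanSpace ℝ (Fin n)) (hxbar : xbar ≠ 0)
    (εt : ℝ) (hεt : 0 ≤ εt) (β : ℝ) (hβ : β = Real.sqrt (1 + εt / (3 * ‖xbar‖ ^ 2))) :
    ∀ x : EuclideanSpace ℝ (Fin n),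
      gGrad n xbar εt x = 0 ↔
        x = 0 ∨ x = β • xbar ∨ x = -(β • xbar) ∨
          (⟪xbar, x⟫ = 0 ∧ ‖x‖ ^ 2 = (‖xbar‖ ^ 2 + εt) / 3) := by
  have hβ_iff (t : ℝ) : 3 * t ^ 2 * ‖xbar‖ ^ 2 = 3 * ‖xbar‖ ^ 2 + εt ↔ t = β ∨ t = -β :=
    hβ ▸ three_mul_sq_mul_sq_eq_iff (norm_ne_zero_iff.mpr hxbar) hεt
  intro x
  constructor
  · intro h
    by_cases hs : ⟪xbar, x⟫ = 0
    · rw [gGrad_of_inner_eq_zero hs, smul_eq_zero, sub_eq_zero] at h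
      rcases h with hnorm | rfl
      · exact .inr <| .inr <| .inr ⟨hs, by linarith⟩
      · exact .inl rfl
    · obtain ⟨t, rfl⟩ := exists_eq_smul_of_smul_eq_smul (gGrad_eq_zero_iff.mp h)
        (smul_ne_zero (by simpa using hs) hxbar)
      have ht : t ≠ 0 := by rintro rfl; simp at hs
      rw [gGrad_smul_self_eq_zero_iff hxbar, or_iff_right ht, hβ_iff] at h
      rcases h with rfl | rfl
      · exact .inr <| .inl rfl
      · exact .inr <| .inr <| .inl (neg_smul _ _)
  · rintro (rfl | rfl | rfl | ⟨hs, hnorm⟩)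
    · simp [gGrad]
    · exact (gGrad_smul_self_eq_zero_iff hxbar β).mpr (.inr ((hβ_iff β).mpr (.inl rfl)))
    · rw [← neg_smul]
      exact (gGrad_smul_self_eq_zero_iff hxbar (-β)).mpr (.inr ((hβ_iff (-β)).mpr (.inr rfl)))
    · rw [gGrad_of_inner_eq_zero hs, hnorm, mul_div_cancel₀ _ three_ne_zero, sub_self, zero_smul]
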